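/- For every nonzero real number a and every (x,y) ∈ ℝ², the map L̃ of Theorem 7.1 satisfies Im b(∂L̃/∂x, ∂L̃/∂y) = 0, i.e. ⟨i·∂L̃/∂x, ∂L̃/∂y⟩ = 0. Combined with horizontality, this expresses that the projected surface π∘L̃ in CH²₁(−4) is Lagrangian. -/

import Mathlib

/-!
Write each coordinate of `L̃` in polar form `ρ · e^{iθ}` with `ρ, θ` real. For such a
coordinate, `Im (conj ∂ₓf · ∂ᵧf) = ρ (∂ₓρ ∂ᵧθ − ∂ₓθ ∂ᵧρ)`. The middle coordinate of `L̃` has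
constant modulus, so it contributes nothing; the outer two share their phase and have moduli
`c cosh ψ`, `c sinh ψ` with `ρ₁ ∂ρ₁ = ρ₃ ∂ρ₃`, so their contributions cancel against the
opposite signs of `b`.
-/

open Complex

/-- The index-two Hermitian form
`b(z,w) = −conj z₁ · w₁ − conj z₂ · w₂ + conj z₃ · w₃` on `ℂ³`, over which the
pseudo-hyperbolic space `H⁵₂(−1) = {z : b(z,z) = −1}` and the Hopf fibration
`π : H⁵₂(−1) → CH²₁(−4)` are defined. -/
noncomputable def bHyp (z w : ℂ × ℂ × ℂ) : ℂ :=
  -(starRingEnd ℂ z.1) * w.1 - (starRingEnd ℂ z.2.1) * w.2.1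
    + (starRingEnd ℂ z.2.2) * w.2.2

/-- The horizontal lift `L̃ : ℝ² → ℂ³` of Theorem 7.1. -/
noncomputable def Lch (a x y : ℝ) : ℂ × ℂ × ℂ :=
  ((1 / Real.sqrt 3 : ℝ) : ℂ) •
    (((Real.sqrt 2 : ℝ) : ℂ) * Complex.exp (-(Complex.I * ((x + a ^ 2 * y : ℝ) : ℂ)) / (2 * (a : ℂ)))
        * ((Real.cosh (Real.sqrt 3 * (x - a ^ 2 * y) / (2 * a)) : ℝ) : ℂ),
     Complex.exp (Complex.I * ((a * y + x / a : ℝ) : ℂ)),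
     ((Real.sqrt 2 : ℝ) : ℂ) * Complex.exp (-(Complex.I * ((x + a ^ 2 * y : ℝ) : ℂ)) / (2 * (a : ℂ)))
        * ((Real.sinh (Real.sqrt 3 * (x - a ^ 2 * y) / (2 * a)) : ℝ) : ℂ))

theorem HasDerivAt.ofReal_mul_exp_mul_I {ρ θ : ℝ → ℝ} {ρ' θ' t : ℝ}
    (hρ : HasDerivAt ρ ρ' t) (hθ : HasDerivAt θ θ' t) :
    HasDerivAt (fun s => (ρ s : ℂ) * Complex.exp (θ s * I))
      ((ρ' + ρ t * θ' * I) * Complex.exp (θ t * I)) t :=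
  (hρ.ofReal_comp.mul (hθ.ofReal_comp.mul_const I).cexp).congr_deriv (by ring)

theorem im_conj_polar_mul_polar (r p q p' q' θ : ℝ) :
    (starRingEnd ℂ ((p + r * q * I) * exp (θ * I)) * ((p' + r * q' * I) * exp (θ * I))).im
      = r * (p * q' - q * p') := by
  rw [map_mul, mul_mul_mul_comm, conj_mul', norm_exp_ofReal_mul_I]
  simp only [one_pow, ofReal_one, mul_one, mul_im, map_add, map_mul, conj_ofReal, conj_I,
    add_re, add_im, mul_re, ofReal_re, ofReal_im, I_re, I_im, neg_re, neg_im]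
  ring

noncomputable def hypPolar (c r ψ α β : ℝ) : ℂ × ℂ × ℂ :=
  (((c * Real.cosh ψ : ℝ) : ℂ) * exp (α * I), (r : ℂ) * exp (β * I),
    ((c * Real.sinh ψ : ℝ) : ℂ) * exp (α * I))

-- `((0 : ℝ) : ℂ)` keeps every coordinate in the shape of `im_conj_polar_mul_polar`.
noncomputable def hypPolarDeriv (c r ψ α β ψ' α' β' : ℝ) : ℂ × ℂ × ℂ :=
  ((((c * (Real.sinh ψ * ψ') : ℝ) : ℂ) + (c * Real.cosh ψ : ℝ) * α' * I) * exp (α * I),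
    (((0 : ℝ) : ℂ) + r * β' * I) * exp (β * I),
    (((c * (Real.cosh ψ * ψ') : ℝ) : ℂ) + (c * Real.sinh ψ : ℝ) * α' * I) * exp (α * I))

theorem HasDerivAt.hypPolar (c r : ℝ) {ψ α β : ℝ → ℝ} {ψ' α' β' t : ℝ}
    (hψ : HasDerivAt ψ ψ' t) (hα : HasDerivAt α α' t) (hβ : HasDerivAt β β' t) :
    HasDerivAt (fun s => hypPolar c r (ψ s) (α s) (β s))
      (hypPolarDeriv c r (ψ t) (α t) (β t) ψ' α' β') t :=
  (HasDerivAt.ofReal_mul_exp_mul_I (hψ.cosh.const_mul c) hα).prodMk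
    ((HasDerivAt.ofReal_mul_exp_mul_I (hasDerivAt_const t r) hβ).prodMk
      (HasDerivAt.ofReal_mul_exp_mul_I (hψ.sinh.const_mul c) hα))

theorem im_bHyp_hypPolarDeriv (c r ψ α β ψ₁ α₁ β₁ ψ₂ α₂ β₂ : ℝ) :
    (bHyp (hypPolarDeriv c r ψ α β ψ₁ α₁ β₁) (hypPolarDeriv c r ψ α β ψ₂ α₂ β₂)).im = 0 := by
  simp only [bHyp, hypPolarDeriv, add_im, sub_im, neg_mul, neg_im, im_conj_polar_mul_polar]
  ring

theorem Lch_eq_hypPolar (a x y : ℝ) :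
    Lch a x y = hypPolar (√2 / √3) (1 / √3) (√3 * (x - a ^ 2 * y) / (2 * a))
      (-(x + a ^ 2 * y) / (2 * a)) (a * y + x / a) := by
  simp only [Lch, hypPolar, Prod.smul_mk, smul_eq_mul]
  push_cast
  refine Prod.ext ?_ (Prod.ext ?_ ?_) <;> dsimp only <;> ring_nf

theorem Lch_lagrangian_general (a : ℝ) :
    ∀ x y : ℝ,
      (bHyp (deriv (fun t => Lch a t y) x) (deriv (fun t => Lch a x t) y)).im = 0 := by
  intro x y
  simp only [Lch_eq_hypPolar]
  have hx := HasDerivAt.hypPolar (√2 / √3) (1 / √3)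
    (by fun_prop : DifferentiableAt ℝ (fun t => √3 * (t - a ^ 2 * y) / (2 * a)) x).hasDerivAt
    (by fun_prop : DifferentiableAt ℝ (fun t => -(t + a ^ 2 * y) / (2 * a)) x).hasDerivAt
    (by fun_prop : DifferentiableAt ℝ (fun t => a * y + t / a) x).hasDerivAt
  have hy := HasDerivAt.hypPolar (√2 / √3) (1 / √3)
    (by fun_prop : DifferentiableAt ℝ (fun t => √3 * (x - a ^ 2 * t) / (2 * a)) y).hasDerivAt
    (by fun_prop : DifferentiableAt ℝ (fun t => -(x + a ^ 2 * t) / (2 * a)) y).hasDerivAt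
    (by fun_prop : DifferentiableAt ℝ (fun t => a * t + x / a) y).hasDerivAt
  rw [hx.deriv, hy.deriv]
  exact im_bHyp_hypPolarDeriv ..

/-- Theorem 7.1: `Im b(∂L̃/∂x, ∂L̃/∂y) = 0`, i.e. `⟨i·∂L̃/∂x, ∂L̃/∂y⟩ = 0`;
combined with horizontality this expresses that `π ∘ L̃` is Lagrangian in
`CH²₁(−4)`. -/
theorem Lch_lagrangian (a : ℝ) (ha : a ≠ 0) :
    ∀ x y : ℝ,
      (bHyp (deriv (fun t => Lch a t y) x) (deriv (fun t => Lch a x t) y)).im = 0 :=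
  Lch_lagrangian_general a
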